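/- Let A₁, A₂, A₃, A₄ be groups and let G be a subgroup of the direct product A₁ × A₂ × A₃ × A₄. For a subset I ⊆ {1,2,3,4}, let G_I denote the subgroup of G consisting of those elements whose component in A_i is the identity for every i ∉ I. Assume that every element of G is a product of an element of G_{{1,2}} and an element of G_{{3,4}}, and also a product of an element of G_{{1,3}} and an element of G_{{2,4}}. Then the multiplication map G_{{1}} × G_{{2}} × G_{{3}} × G_{{4}} → G, (g₁, g₂, g₃, g₄) ↦ g₁g₂g₃g₄, is a group isomorphism. -/
import Mathlib


/-- For a subgroup `G` of a product `A₁ × A₂ × A₃ × A₄` and a set `I ⊆ {1,2,3,4}`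
(indexed here by `Fin 4`), the subgroup `G_I` of `G` consisting of the elements
whose component in `A_i` is the identity for every `i ∉ I`. -/
def coordSubgroup {A1 A2 A3 A4 : Type} [Group A1] [Group A2] [Group A3] [Group A4]
    (G : Subgroup (A1 × A2 × A3 × A4)) (I : Finset (Fin 4)) : Subgroup G :=
  (if 0 ∈ I then (⊤ : Subgroup G) else
      ((MonoidHom.fst A1 (A2 × A3 × A4)).comp G.subtype).ker) ⊓
  ((if 1 ∈ I then (⊤ : Subgroup G) else
      (((MonoidHom.fst A2 (A3 × A4)).comp
        (MonoidHom.snd A1 (A2 × A3 × A4))).comp G.subtype).ker) ⊓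
  ((if 2 ∈ I then (⊤ : Subgroup G) else
      ((((MonoidHom.fst A3 A4).comp (MonoidHom.snd A2 (A3 × A4))).comp
        (MonoidHom.snd A1 (A2 × A3 × A4))).comp G.subtype).ker) ⊓
  (if 3 ∈ I then (⊤ : Subgroup G) else
      ((((MonoidHom.snd A3 A4).comp (MonoidHom.snd A2 (A3 × A4))).comp
        (MonoidHom.snd A1 (A2 × A3 × A4))).comp G.subtype).ker)))

lemma mem_coordSubgroup {A1 A2 A3 A4 : Type} [Group A1] [Group A2] [Group A3] [Group A4]
    (G : Subgroup (A1 × A2 × A3 × A4)) (I : Finset (Fin 4)) (g : G) :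
    g ∈ coordSubgroup G I ↔
      ((0 : Fin 4) ∉ I → (g : A1 × A2 × A3 × A4).1 = 1) ∧
      ((1 : Fin 4) ∉ I → (g : A1 × A2 × A3 × A4).2.1 = 1) ∧
      ((2 : Fin 4) ∉ I → (g : A1 × A2 × A3 × A4).2.2.1 = 1) ∧
      ((3 : Fin 4) ∉ I → (g : A1 × A2 × A3 × A4).2.2.2 = 1) := by
  unfold coordSubgroup
  split_ifs with h0 h1 h2 h3 <;>
    simp_all [Subgroup.mem_inf, MonoidHom.mem_ker]

/-- **Splitting a subgroup of a fourfold product (Section 4).**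
Let `G ≤ A₁ × A₂ × A₃ × A₄`.  If every element of `G` is a product of an element of
`G_{1,2}` and an element of `G_{3,4}`, and also a product of an element of `G_{1,3}`
and an element of `G_{2,4}`, then the multiplication map
`G_{1} × G_{2} × G_{3} × G_{4} → G` is a group isomorphism. -/
theorem coordSubgroup_mul_equiv
    {A1 A2 A3 A4 : Type} [Group A1] [Group A2] [Group A3] [Group A4]
    (G : Subgroup (A1 × A2 × A3 × A4))
    (h1 : ∀ g : G, ∃ a ∈ coordSubgroup G {0, 1}, ∃ b ∈ coordSubgroup G {2, 3}, g = a * b)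
    (h2 : ∀ g : G, ∃ a ∈ coordSubgroup G {0, 2}, ∃ b ∈ coordSubgroup G {1, 3}, g = a * b) :
    (∀ x y : ↥(coordSubgroup G {0}) × ↥(coordSubgroup G {1}) ×
        ↥(coordSubgroup G {2}) × ↥(coordSubgroup G {3}),
      ((((x * y).1 : G) * ((x * y).2.1 : G) * ((x * y).2.2.1 : G) * ((x * y).2.2.2 : G)) =
        ((x.1 : G) * (x.2.1 : G) * (x.2.2.1 : G) * (x.2.2.2 : G)) *
        ((y.1 : G) * (y.2.1 : G) * (y.2.2.1 : G) * (y.2.2.2 : G)))) ∧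
    Function.Bijective
      (fun x : ↥(coordSubgroup G {0}) × ↥(coordSubgroup G {1}) ×
          ↥(coordSubgroup G {2}) × ↥(coordSubgroup G {3}) =>
        ((x.1 : G) * (x.2.1 : G) * (x.2.2.1 : G) * (x.2.2.2 : G))) := by
  have m0 : ∀ x : ↥(coordSubgroup G {0}),
      ((x : G) : A1 × A2 × A3 × A4).2.1 = 1 ∧ ((x : G) : A1 × A2 × A3 × A4).2.2.1 = 1 ∧
      ((x : G) : A1 × A2 × A3 × A4).2.2.2 = 1 := fun x => by
    have h := (mem_coordSubgroup G _ _).mp x.2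
    exact ⟨h.2.1 (by decide), h.2.2.1 (by decide), h.2.2.2 (by decide)⟩
  have m1 : ∀ x : ↥(coordSubgroup G {1}),
      ((x : G) : A1 × A2 × A3 × A4).1 = 1 ∧ ((x : G) : A1 × A2 × A3 × A4).2.2.1 = 1 ∧
      ((x : G) : A1 × A2 × A3 × A4).2.2.2 = 1 := fun x => by
    have h := (mem_coordSubgroup G _ _).mp x.2
    exact ⟨h.1 (by decide), h.2.2.1 (by decide), h.2.2.2 (by decide)⟩
  have m2 : ∀ x : ↥(coordSubgroup G {2}),
      ((x : G) : A1 × A2 × A3 × A4).1 = 1 ∧ ((x : G) : A1 × A2 × A3 × A4).2.1 = 1 ∧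
      ((x : G) : A1 × A2 × A3 × A4).2.2.2 = 1 := fun x => by
    have h := (mem_coordSubgroup G _ _).mp x.2
    exact ⟨h.1 (by decide), h.2.1 (by decide), h.2.2.2 (by decide)⟩
  have m3 : ∀ x : ↥(coordSubgroup G {3}),
      ((x : G) : A1 × A2 × A3 × A4).1 = 1 ∧ ((x : G) : A1 × A2 × A3 × A4).2.1 = 1 ∧
      ((x : G) : A1 × A2 × A3 × A4).2.2.1 = 1 := fun x => by
    have h := (mem_coordSubgroup G _ _).mp x.2
    exact ⟨h.1 (by decide), h.2.1 (by decide), h.2.2.1 (by decide)⟩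
  -- the coordinates of the fourfold product
  have key : ∀ x : ↥(coordSubgroup G {0}) × ↥(coordSubgroup G {1}) ×
      ↥(coordSubgroup G {2}) × ↥(coordSubgroup G {3}),
      (((x.1 : G) * (x.2.1 : G) * (x.2.2.1 : G) * (x.2.2.2 : G) : G) : A1 × A2 × A3 × A4) =
      (((x.1 : G) : A1 × A2 × A3 × A4).1, ((x.2.1 : G) : A1 × A2 × A3 × A4).2.1,
       ((x.2.2.1 : G) : A1 × A2 × A3 × A4).2.2.1,
       ((x.2.2.2 : G) : A1 × A2 × A3 × A4).2.2.2) := by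
    rintro ⟨a, b, c, d⟩
    obtain ⟨a2, a3, a4⟩ := m0 a
    obtain ⟨b1, b3, b4⟩ := m1 b
    obtain ⟨c1, c2, c4⟩ := m2 c
    obtain ⟨d1, d2, d3⟩ := m3 d
    refine Prod.ext ?_ (Prod.ext ?_ (Prod.ext ?_ ?_)) <;>
      simp [Subgroup.coe_mul, a2, a3, a4, b1, b3, b4, c1, c2, c4, d1, d2, d3]
  refine ⟨?_, ?_, ?_⟩
  · -- multiplicativity: compare coordinates via `key`
    intro x y
    refine Subtype.ext ?_
    rw [key (x * y), Subgroup.coe_mul, key x, key y]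
    have e1 : ((x * y).1 : G) = (x.1 : G) * (y.1 : G) := rfl
    have e2 : ((x * y).2.1 : G) = (x.2.1 : G) * (y.2.1 : G) := rfl
    have e3 : ((x * y).2.2.1 : G) = (x.2.2.1 : G) * (y.2.2.1 : G) := rfl
    have e4 : ((x * y).2.2.2 : G) = (x.2.2.2 : G) * (y.2.2.2 : G) := rfl
    simp [e1, e2, e3, e4, Subgroup.coe_mul, Prod.mul_def]
  · -- injectivity
    intro x y hxy
    have hx := key x
    have hy := key y
    simp only at hxy
    rw [hxy] at hx
    rw [hy] at hx
    rw [Prod.mk.injEq, Prod.mk.injEq, Prod.mk.injEq] at hx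
    obtain ⟨q1, q2, q3, q4⟩ := hx
    obtain ⟨a2, a3, a4⟩ := m0 x.1
    obtain ⟨b1, b3, b4⟩ := m1 x.2.1
    obtain ⟨c1, c2, c4⟩ := m2 x.2.2.1
    obtain ⟨d1, d2, d3⟩ := m3 x.2.2.2
    obtain ⟨a2', a3', a4'⟩ := m0 y.1
    obtain ⟨b1', b3', b4'⟩ := m1 y.2.1
    obtain ⟨c1', c2', c4'⟩ := m2 y.2.2.1
    obtain ⟨d1', d2', d3'⟩ := m3 y.2.2.2
    have E1 : x.1 = y.1 := Subtype.ext (Subtype.ext (Prod.ext q1.symm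
      (Prod.ext (a2.trans a2'.symm) (Prod.ext (a3.trans a3'.symm) (a4.trans a4'.symm)))))
    have E2 : x.2.1 = y.2.1 := Subtype.ext (Subtype.ext (Prod.ext (b1.trans b1'.symm)
      (Prod.ext q2.symm (Prod.ext (b3.trans b3'.symm) (b4.trans b4'.symm)))))
    have E3 : x.2.2.1 = y.2.2.1 := Subtype.ext (Subtype.ext (Prod.ext (c1.trans c1'.symm)
      (Prod.ext (c2.trans c2'.symm) (Prod.ext q3.symm (c4.trans c4'.symm)))))
    have E4 : x.2.2.2 = y.2.2.2 := Subtype.ext (Subtype.ext (Prod.ext (d1.trans d1'.symm)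
      (Prod.ext (d2.trans d2'.symm) (Prod.ext (d3.trans d3'.symm) q4.symm))))
    exact Prod.ext E1 (Prod.ext E2 (Prod.ext E3 E4))
  · -- surjectivity
    intro g
    obtain ⟨a, ha, b, hb, hab⟩ := h1 g
    obtain ⟨c, hc, d, hd, hcd⟩ := h2 a
    obtain ⟨e, he, f, hf, hef⟩ := h2 b
    have ha' := (mem_coordSubgroup G _ _).mp ha
    have hb' := (mem_coordSubgroup G _ _).mp hb
    have hc' := (mem_coordSubgroup G _ _).mp hc
    have hd' := (mem_coordSubgroup G _ _).mp hd
    have he' := (mem_coordSubgroup G _ _).mp he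
    have hf' := (mem_coordSubgroup G _ _).mp hf
    -- c ∈ G_{0}
    have hc0 : c ∈ coordSubgroup G {0} := by
      rw [mem_coordSubgroup]
      refine ⟨fun h => absurd (by decide) h, fun _ => hc'.2.1 (by decide), fun _ => ?_,
        fun _ => hc'.2.2.2 (by decide)⟩
      have := ha'.2.2.1 (by decide)
      rw [hcd] at this
      simpa [Subgroup.coe_mul, hd'.2.2.1 (by decide)] using this
    have hd1 : d ∈ coordSubgroup G {1} := by
      rw [mem_coordSubgroup]
      refine ⟨fun _ => hd'.1 (by decide), fun h => absurd (by decide) h,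
        fun _ => hd'.2.2.1 (by decide), fun _ => ?_⟩
      have := ha'.2.2.2 (by decide)
      rw [hcd] at this
      simpa [Subgroup.coe_mul, hc'.2.2.2 (by decide)] using this
    have he2 : e ∈ coordSubgroup G {2} := by
      rw [mem_coordSubgroup]
      refine ⟨fun _ => ?_, fun _ => he'.2.1 (by decide), fun h => absurd (by decide) h,
        fun _ => he'.2.2.2 (by decide)⟩
      have := hb'.1 (by decide)
      rw [hef] at this
      simpa [Subgroup.coe_mul, hf'.1 (by decide)] using this
    have hf3 : f ∈ coordSubgroup G {3} := by
      rw [mem_coordSubgroup]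
      refine ⟨fun _ => hf'.1 (by decide), fun _ => ?_, fun _ => hf'.2.2.1 (by decide),
        fun h => absurd (by decide) h⟩
      have := hb'.2.1 (by decide)
      rw [hef] at this
      simpa [Subgroup.coe_mul, he'.2.1 (by decide)] using this
    refine ⟨⟨⟨c, hc0⟩, ⟨d, hd1⟩, ⟨e, he2⟩, ⟨f, hf3⟩⟩, ?_⟩
    simp only
    rw [hab, hcd, hef]
    group
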